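/- arXiv:1011.1452 — 4 statements merged into one kernel-verified Lean document; each statement's English description precedes it below -/
import Mathlib

section
/- Fix integers $N_1,N_2\ge 1$, real charges $\{q_i\}_{i\ge0}$, and a path $S$ in $\mathbb{Z}^d$. Let $Q_N^x=\sum_{0\le i<N}q_i\mathbf{1}_{\{S_i=x\}}$, $H_N=\sum_x (Q_N^x)^2$, and define the shifted quantities $\tilde q_i=q_{N_1+i}$, $\tilde S_i=S_{N_1+i}-S_{N_1}$, $\tilde Q_N^x=\sum_{0\le i<N}\tilde q_i\mathbf{1}_{\{\tilde S_i=x\}}$, and $\tilde H_N=\sum_x(\tilde Q_N^x)^2$. Then $\frac{H_{N_1+N_2}}{N_1+N_2} \le \frac{H_{N_1}}{N_1} + \frac{\tilde H_{N_2}}{N_2}$. -/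
/-!
Splitting the monomers at `N₁` splits each site charge as `Q_{N₁+N₂}^x = Q_{N₁}^x + Q̃_{N₂}^{x - S_{N₁}}`
(translating the path only relabels sites, so `H̃` is unchanged by the shift), and summing the
two-term Sedrakyan inequality `(a + b)² / (n + m) ≤ a² / n + b² / m` over sites gives the claim.
-/

open MeasureTheory Filter Finset Real
open scoped ENNReal

noncomputable section

/-- Total charge at site `x` for charges `q` and path `S`, among monomers `0 ≤ i < N`. -/
def Qof {d : ℕ} (N : ℕ) (q : ℕ → ℝ) (S : ℕ → Fin d → ℤ) (x : Fin d → ℤ) : ℝ :=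
  ∑ i ∈ Finset.range N, if S i = x then q i else 0

/-- Energy `H_N = ∑_x (Q_N^x)²` (the sum over all of `ℤ^d` reduces to visited sites). -/
def Hof {d : ℕ} (N : ℕ) (q : ℕ → ℝ) (S : ℕ → Fin d → ℤ) : ℝ :=
  ∑ x ∈ (Finset.range N).image S, (Qof N q S x) ^ 2

lemma add_sq_div_add_le {a b n m : ℝ} (hn : 0 < n) (hm : 0 < m) :
    (a + b) ^ 2 / (n + m) ≤ a ^ 2 / n + b ^ 2 / m := by
  simpa using sq_sum_div_le_sum_sq_div univ ![a, b] (g := ![n, m])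
    (by simp [Fin.forall_fin_two, hn, hm])

section Charge

variable {d : ℕ} (N : ℕ) (q : ℕ → ℝ) (S : ℕ → Fin d → ℤ)

lemma Qof_eq_zero_of_notMem {x : Fin d → ℤ} (hx : x ∉ (range N).image S) :
    Qof N q S x = 0 :=
  sum_eq_zero fun i hi => if_neg fun (h : S i = x) => hx (h ▸ mem_image_of_mem S hi)

lemma Hof_eq_sum_of_subset {T : Finset (Fin d → ℤ)} (hT : (range N).image S ⊆ T) :
    Hof N q S = ∑ x ∈ T, Qof N q S x ^ 2 :=
  sum_subset hT fun x _ hx => by rw [Qof_eq_zero_of_notMem N q S hx, sq, zero_mul]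

lemma Qof_sub_const (v x : Fin d → ℤ) :
    Qof N q (fun i => S i - v) (x - v) = Qof N q S x := by
  simp only [Qof, sub_left_inj]

lemma Hof_sub_const (v : Fin d → ℤ) : Hof N q (fun i => S i - v) = Hof N q S := by
  have himage : (range N).image (fun i => S i - v) = ((range N).image S).image (· - v) := by
    rw [image_image]; rfl
  rw [Hof, himage, sum_image fun x _ y _ h => sub_left_injective h]
  simp only [Qof_sub_const, Hof]

lemma Qof_add (N₁ N₂ : ℕ) (x : Fin d → ℤ) :
    Qof (N₁ + N₂) q S x = Qof N₁ q S x + Qof N₂ (fun i => q (N₁ + i)) (fun i => S (N₁ + i)) x :=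
  sum_range_add _ N₁ N₂

end Charge

/-- subadditivity of the normalized energy:
`H_{N₁+N₂}/(N₁+N₂) ≤ H_{N₁}/N₁ + H̃_{N₂}/N₂` where the tilde quantities are
built from the shifted charges `q̃ᵢ = q_{N₁+i}` and shifted path
`S̃ᵢ = S_{N₁+i} - S_{N₁}`. -/
theorem energy_subadditive {d : ℕ} (N₁ N₂ : ℕ) (h₁ : 1 ≤ N₁) (h₂ : 1 ≤ N₂)
    (q : ℕ → ℝ) (S : ℕ → Fin d → ℤ) :
    Hof (N₁ + N₂) q S / (N₁ + N₂ : ℝ) ≤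
      Hof N₁ q S / (N₁ : ℝ) +
      Hof N₂ (fun i => q (N₁ + i)) (fun i => S (N₁ + i) - S N₁) / (N₂ : ℝ) := by
  set T := (range (N₁ + N₂)).image S
  rw [Hof_sub_const N₂ _ (fun i => S (N₁ + i)),
    Hof_eq_sum_of_subset _ _ _ (subset_refl T),
    Hof_eq_sum_of_subset N₁ q S (T := T) (image_subset_image (range_subset_range.2 (by omega))),
    Hof_eq_sum_of_subset N₂ _ _ (T := T) ?tail_visits_subset,
    sum_div, sum_div, sum_div, ← sum_add_distrib]
  case tail_visits_subset =>
    simp only [T, image_subset_iff, mem_image, mem_range]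
    exact fun i hi => ⟨N₁ + i, by omega, rfl⟩
  refine sum_le_sum fun x _ => ?_
  rw [Qof_add]
  exact add_sq_div_add_le (by exact_mod_cast h₁) (by exact_mod_cast h₂)
end
end

section
/- Let $q_0,\dots,q_{N-1}$ be real numbers and let $S$ be any nearest-neighbor path in $\mathbb{Z}^d$ starting at $0$. For a parity $p\in\{\mathrm{odd},\mathrm{even}\}$ and sign $\varepsilon\in\{+,-\}$, set $Q_\varepsilon^p=\sum_{0\le i<N,\ i\equiv p} q_i^\varepsilon$ (where $q^+ = \max(q,0)$, $q^-=\max(-q,0)$). Then the energy $H_N(S)=\sum_{x\in\mathbb{Z}^d}(\sum_{0\le i<N}q_i\mathbf{1}_{\{S_i=x\}})^2$ satisfies $H_N(S) \le (Q_+^{\mathrm{odd}})^2+(Q_-^{\mathrm{odd}})^2+(Q_+^{\mathrm{even}})^2+(Q_-^{\mathrm{even}})^2$. -/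
open MeasureTheory Filter Finset Real
open scoped ENNReal

noncomputable section

/-- `v` is a unit step in `ℤ^d`. -/
def IsUnitStep {d : ℕ} (v : Fin d → ℤ) : Prop := (∑ j, |v j|) = 1

/-- `S` is a nearest-neighbor path in `ℤ^d` starting at `0`. -/
def IsNNPath {d : ℕ} (S : ℕ → Fin d → ℤ) : Prop :=
  S 0 = 0 ∧ ∀ i, IsUnitStep (fun j => S (i + 1) j - S i j)

/-- Positive (`s = true`) or negative (`s = false`) part of a real charge. -/
def Qsgn (s : Bool) (r : ℝ) : ℝ := if s then max r 0 else max (-r) 0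

/-- `Q_ε^p`: total charge of sign `s` at indices of parity `p`
(`p = true` means odd). -/
def Qpar (N : ℕ) (q : ℕ → ℝ) (p : Bool) (s : Bool) : ℝ :=
  ∑ i ∈ Finset.range N, if i % 2 = (if p then 1 else 0) then Qsgn s (q i) else 0

lemma Qsgn_nonneg (s : Bool) (r : ℝ) : 0 ≤ Qsgn s r := by
  cases s <;> simp [Qsgn]

lemma Qsgn_sub (r : ℝ) : Qsgn true r - Qsgn false r = r := by
  show max r 0 - max (-r) 0 = r
  rcases le_total r 0 with h | h
  · rw [max_eq_right h, max_eq_left (by linarith)]; ring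
  · rw [max_eq_left h, max_eq_right (by linarith)]; ring

lemma step_parity {d : ℕ} (v : Fin d → ℤ) (hv : IsUnitStep v) :
    (∑ j, ((v j : ZMod 2))) = 1 := by
  have h : ∀ j : Fin d, ((|v j| : ℤ) : ZMod 2) = ((v j : ℤ) : ZMod 2) := by
    intro j
    rcases abs_choice (v j) with h | h <;> rw [h]
    push_cast
    ring_nf
    have : (2 : ZMod 2) = 0 := by decide
    calc -(v j : ZMod 2) = -(v j : ZMod 2) + 2 * (v j : ZMod 2) := by rw [this]; ring
      _ = (v j : ZMod 2) := by ring
  calc ∑ j, ((v j : ℤ) : ZMod 2) = ∑ j, ((|v j| : ℤ) : ZMod 2) := by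
        exact (Finset.sum_congr rfl fun j _ => (h j).symm)
    _ = ((∑ j, |v j| : ℤ) : ZMod 2) := by push_cast; ring
    _ = 1 := by rw [hv]; norm_num

lemma path_parity {d : ℕ} (S : ℕ → Fin d → ℤ) (hS : IsNNPath S) (i : ℕ) :
    (∑ j, ((S i j : ZMod 2))) = (i : ZMod 2) := by
  induction i with
  | zero =>
    have h0 : ∀ j, S 0 j = 0 := fun j => congrFun hS.1 j
    simp [h0]
  | succ n ih =>
    have h := step_parity _ (hS.2 n)
    have key : (∑ j, ((S (n+1) j : ZMod 2)))
        = (∑ j, ((S (n+1) j - S n j : ℤ) : ZMod 2)) + ∑ j, ((S n j : ZMod 2)) := by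
      rw [← Finset.sum_add_distrib]
      apply Finset.sum_congr rfl
      intro j _
      push_cast
      ring
    rw [key, h, ih]
    push_cast
    ring

lemma zmod2_cases (a : ZMod 2) : a = 0 ∨ a = 1 := by revert a; decide

lemma natCast_zmod2_eq (i : ℕ) (b : Bool) :
    ((i : ZMod 2) = (if b then 1 else 0)) ↔ (i % 2 = if b then 1 else 0) := by
  have h : ((i : ZMod 2)) = ((i % 2 : ℕ) : ZMod 2) := (ZMod.natCast_mod i 2).symm
  have h2 : i % 2 = 0 ∨ i % 2 = 1 := Nat.mod_two_eq_zero_or_one i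
  cases b <;> rcases h2 with h2 | h2 <;> simp [h, h2] <;> decide

/-- for any nearest-neighbor path started at the origin,
`H_N ≤ (Q₊^odd)² + (Q₋^odd)² + (Q₊^even)² + (Q₋^even)²`. -/
theorem energy_le_four_squares {d : ℕ} (N : ℕ) (q : ℕ → ℝ) (S : ℕ → Fin d → ℤ)
    (hS : IsNNPath S) :
    Hof N q S ≤ (Qpar N q true true) ^ 2 + (Qpar N q true false) ^ 2 +
      (Qpar N q false true) ^ 2 + (Qpar N q false false) ^ 2 := by
  classical
  set T := (Finset.range N).image S with hT
  set f : Bool → (Fin d → ℤ) → ℝ := fun s x =>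
    ∑ i ∈ Finset.range N, if S i = x then Qsgn s (q i) else 0 with hf
  have hfnn : ∀ s x, 0 ≤ f s x := by
    intro s x
    apply Finset.sum_nonneg
    intro i _
    split
    · exact Qsgn_nonneg s (q i)
    · exact le_rfl
  have hQof : ∀ x, Qof N q S x = f true x - f false x := by
    intro x
    rw [hf]
    simp only [Qof, ← Finset.sum_sub_distrib]
    apply Finset.sum_congr rfl
    intro i _
    split
    · exact (Qsgn_sub (q i)).symm
    · ring
  -- pointwise bound
  have step1 : Hof N q S ≤ ∑ x ∈ T, ((f true x) ^ 2 + (f false x) ^ 2) := by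
    apply Finset.sum_le_sum
    intro x _
    rw [hQof x]
    nlinarith [hfnn true x, hfnn false x]
  -- split by parity
  set P : (Fin d → ℤ) → Prop := fun x => (∑ j, ((x j : ZMod 2))) = 1 with hP
  have hPdec : DecidablePred P := fun x => by unfold P; infer_instance
  have hsplit : ∀ s : Bool, ∑ x ∈ T, (f s x) ^ 2 =
      (∑ x ∈ T.filter P, (f s x) ^ 2) + ∑ x ∈ T.filter (fun x => ¬ P x), (f s x) ^ 2 :=
    fun s => (Finset.sum_filter_add_sum_filter_not T P _).symm
  -- sum of f over a parity class equals Qpar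
  have hsum : ∀ (p s : Bool),
      (∑ x ∈ T.filter (fun x => (∑ j, ((x j : ZMod 2))) = (if p then 1 else 0)), f s x)
        = Qpar N q p s := by
    intro p s
    rw [hf]
    rw [Finset.sum_comm]
    unfold Qpar
    apply Finset.sum_congr rfl
    intro i hi
    rw [Finset.sum_ite_eq]
    have hmem : S i ∈ T := Finset.mem_image_of_mem S hi
    have hpar : (∑ j, ((S i j : ZMod 2))) = (i : ZMod 2) := path_parity S hS i
    by_cases hc : i % 2 = (if p then 1 else 0)
    · have : S i ∈ T.filter (fun x => (∑ j, ((x j : ZMod 2))) = (if p then 1 else 0)) := by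
        rw [Finset.mem_filter]
        exact ⟨hmem, by rw [hpar]; exact (natCast_zmod2_eq i p).mpr hc⟩
      simp [this, hc]
    · have : S i ∉ T.filter (fun x => (∑ j, ((x j : ZMod 2))) = (if p then 1 else 0)) := by
        rw [Finset.mem_filter]
        rintro ⟨-, h⟩
        exact hc ((natCast_zmod2_eq i p).mp (hpar ▸ h))
      simp [this, hc]
  -- the not-P filter is the even filter
  have hnot : T.filter (fun x => ¬ P x)
      = T.filter (fun x => (∑ j, ((x j : ZMod 2))) = (if (false : Bool) then 1 else 0)) := by
    apply Finset.filter_congr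
    intro x _
    simp only [hP, Bool.false_eq_true, if_false]
    constructor
    · intro h
      rcases zmod2_cases (∑ j, ((x j : ZMod 2))) with h0 | h1
      · exact h0
      · exact absurd h1 h
    · intro h h1
      rw [h] at h1
      exact absurd h1 (by decide)
  have hPT : T.filter P
      = T.filter (fun x => (∑ j, ((x j : ZMod 2))) = (if (true : Bool) then 1 else 0)) := by
    simp [hP]
  -- bound each class
  have hclass : ∀ (p s : Bool),
      (∑ x ∈ T.filter (fun x => (∑ j, ((x j : ZMod 2))) = (if p then 1 else 0)), (f s x) ^ 2)
        ≤ (Qpar N q p s) ^ 2 := by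
    intro p s
    rw [← hsum p s]
    exact Finset.sum_sq_le_sq_sum_of_nonneg (fun x _ => hfnn s x)
  calc Hof N q S ≤ ∑ x ∈ T, ((f true x) ^ 2 + (f false x) ^ 2) := step1
    _ = (∑ x ∈ T, (f true x) ^ 2) + ∑ x ∈ T, (f false x) ^ 2 := Finset.sum_add_distrib
    _ = ((∑ x ∈ T.filter P, (f true x) ^ 2) + ∑ x ∈ T.filter (fun x => ¬ P x), (f true x) ^ 2)
        + ((∑ x ∈ T.filter P, (f false x) ^ 2)
          + ∑ x ∈ T.filter (fun x => ¬ P x), (f false x) ^ 2) := by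
        rw [hsplit true, hsplit false]
    _ ≤ (Qpar N q true true) ^ 2 + (Qpar N q false true) ^ 2
        + ((Qpar N q true false) ^ 2 + (Qpar N q false false) ^ 2) := by
        rw [hPT, hnot]
        gcongr <;> [exact hclass true true; exact hclass false true;
          exact hclass true false; exact hclass false false]
    _ = (Qpar N q true true) ^ 2 + (Qpar N q true false) ^ 2 +
      (Qpar N q false true) ^ 2 + (Qpar N q false false) ^ 2 := by ring
end
end

section
/- Let $d=1$ (or any $d\ge1$). With charges $q_0,\dots,q_{N-1}$ and any nearest-neighbor path $S$, define $x_\varepsilon^p$ as a site of parity $p$ maximizing $\varepsilon Q_N^x$, and the charge distance to optimality $D_N = \sum_{\varepsilon\in\{+,-\}}\sum_{p\in\{\mathrm{odd},\mathrm{even}\}} Q_\varepsilon^p (Q_\varepsilon^p - \varepsilon Q_N^{x_\varepsilon^p})$. If $\varepsilon,\varepsilon'\in\{+,-\}$ are such that $\|x_\varepsilon^{\mathrm{odd}} - x_{\varepsilon'}^{\mathrm{even}}\| \ne 1$, then $D_N \ge \sum_{1\le i<N,\ i\ \mathrm{odd}} \min(Q_\varepsilon^{\mathrm{odd}} q_i^\varepsilon,\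 Q_{\varepsilon'}^{\mathrm{even}} q_{i-1}^{\varepsilon'})$. -/
/-
A site of parity `p` can only be occupied at times of parity `p`, so for any such site `y` the
charges of sign `ε` at times of parity `p` that are not spent at `y` are bounded by the gap
`Q_ε^p - ε Q_N^y`; in particular every summand of `D_N` is nonnegative. For odd `i` the sites
`S_{i-1}` and `S_i` are adjacent while `x_ε^odd` and `x_{ε'}^even` are not, so `S_i ≠ x_ε^odd` or
`S_{i-1} ≠ x_{ε'}^even`: the pair `(i - 1, i)` loses `q_i^ε` from the first gap or `q_{i-1}^{ε'}`
from the second, and weighting the two gaps by `Q_ε^odd` and `Q_{ε'}^even` gives the bound.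
-/

open MeasureTheory Filter Finset Real
open scoped ENNReal

noncomputable section

/-- The sign `+1` / `-1` associated with `s : Bool`. -/
def sgnVal (s : Bool) : ℝ := if s then 1 else -1

/-- The parity (as an integer `1` = odd, `0` = even) associated with `p`. -/
def parInt (p : Bool) : ℤ := if p then 1 else 0

/-- The charge distance to optimality
`D_N = ∑_{ε,p} Q_ε^p (Q_ε^p - ε Q_N^{x_ε^p})`, where `x s p` is a site of
parity `p` maximizing `ε ↦ ε Q_N^x`. -/
def Ddist {d : ℕ} (N : ℕ) (q : ℕ → ℝ) (S : ℕ → Fin d → ℤ)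
    (x : Bool → Bool → (Fin d → ℤ)) : ℝ :=
  ∑ s : Bool, ∑ p : Bool,
    Qpar N q p s * (Qpar N q p s - sgnVal s * Qof N q S (x s p))

lemma sgnVal_mul_le_Qsgn (s : Bool) (r : ℝ) : sgnVal s * r ≤ Qsgn s r := by
  cases s <;> simp [Qsgn, sgnVal]

lemma Qpar_nonneg (N : ℕ) (q : ℕ → ℝ) (p s : Bool) : 0 ≤ Qpar N q p s :=
  sum_nonneg fun i _ => by split_ifs <;> simp [Qsgn_nonneg]

lemma natCast_emod_two_eq_parInt_iff (i : ℕ) (p : Bool) :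
    (i : ℤ) % 2 = parInt p ↔ i % 2 = if p then 1 else 0 := by
  cases p <;> simp [parInt] <;> omega

lemma IsUnitStep.sum_emod_two {d : ℕ} {v : Fin d → ℤ} (h : IsUnitStep v) :
    (∑ j, v j) % 2 = 1 := by
  have habs : (2 : ℤ) ∣ ∑ j, (|v j| - v j) :=
    dvd_sum fun j _ => by
      rcases abs_choice (v j) with h | h <;> rw [h]
      exacts [by simp, ⟨-v j, by ring⟩]
  have hone : ∑ j, |v j| = 1 := h
  rw [sum_sub_distrib] at habs
  omega

lemma IsNNPath.sum_emod_two {d : ℕ} {S : ℕ → Fin d → ℤ} (hS : IsNNPath S) (i : ℕ) :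
    (∑ j, S i j) % 2 = (i : ℤ) % 2 := by
  induction i with
  | zero => simp [hS.1]
  | succ n ih =>
    have hstep := (hS.2 n).sum_emod_two
    rw [sum_sub_distrib] at hstep
    push_cast
    omega

lemma IsNNPath.ne_or_ne_of_not_adj {d : ℕ} {S : ℕ → Fin d → ℤ} (hS : IsNNPath S)
    {y z : Fin d → ℤ} (hyz : ∑ j, |y j - z j| ≠ 1) {i : ℕ} (hi : 1 ≤ i) :
    S i ≠ y ∨ S (i - 1) ≠ z := by
  by_contra! h
  have hstep : ∑ j, |S (i - 1 + 1) j - S (i - 1) j| = 1 := hS.2 (i - 1)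
  rw [Nat.sub_add_cancel hi, h.1, h.2] at hstep
  exact hyz hstep

lemma sum_Qsgn_of_ne_le_Qpar_sub {d : ℕ} (N : ℕ) (q : ℕ → ℝ) {S : ℕ → Fin d → ℤ}
    (hS : IsNNPath S) {p : Bool} (s : Bool) {y : Fin d → ℤ}
    (hy : (∑ j, y j) % 2 = parInt p) :
    ∑ i ∈ (range N).filter (fun i => i % 2 = (if p then 1 else 0) ∧ S i ≠ y), Qsgn s (q i)
      ≤ Qpar N q p s - sgnVal s * Qof N q S y := by
  rw [Qpar, Qof, mul_sum, ← sum_sub_distrib, sum_filter]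
  refine sum_le_sum fun i _ => ?_
  by_cases h : S i = y
  · have hip : i % 2 = if p then 1 else 0 := by
      rw [← natCast_emod_two_eq_parInt_iff, ← hS.sum_emod_two, h, hy]
    simp only [h, hip, ne_eq, not_true_eq_false, and_false, if_false, if_true]
    linarith [sgnVal_mul_le_Qsgn s (q i)]
  · split_ifs <;> simp_all

lemma sgnVal_mul_Qof_le_Qpar {d : ℕ} (N : ℕ) (q : ℕ → ℝ) {S : ℕ → Fin d → ℤ}
    (hS : IsNNPath S) {p : Bool} (s : Bool) {y : Fin d → ℤ}
    (hy : (∑ j, y j) % 2 = parInt p) :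
    sgnVal s * Qof N q S y ≤ Qpar N q p s := by
  have := sum_Qsgn_of_ne_le_Qpar_sub N q hS s hy
  have := sum_nonneg fun i (_ : i ∈ (range N).filter
    (fun i => i % 2 = (if p then 1 else 0) ∧ S i ≠ y)) => Qsgn_nonneg s (q i)
  linarith

lemma sum_filter_odd_le_sum_filter_even {N : ℕ} {g : ℕ → ℝ} (hg : ∀ j, 0 ≤ g j)
    (Q : ℕ → Prop) [DecidablePred Q] :
    ∑ i ∈ (range N).filter (fun i => i % 2 = 1 ∧ Q (i - 1)), g (i - 1)
      ≤ ∑ j ∈ (range N).filter (fun j => j % 2 = 0 ∧ Q j), g j := by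
  rw [← sum_image (g := fun i => i - 1) fun a ha b hb hab => by
    simp only [coe_filter, mem_range, Set.mem_ofPred_eq] at ha hb
    dsimp only at hab
    omega]
  refine sum_le_sum_of_subset_of_nonneg ?_ fun j _ _ => hg j
  intro j hj
  simp only [mem_image, mem_filter, mem_range] at hj ⊢
  obtain ⟨i, ⟨hiN, hodd, hQ⟩, rfl⟩ := hj
  exact ⟨by omega, by omega, hQ⟩

lemma sum_filter_odd_min_le {N : ℕ} {f g : ℕ → ℝ} (hf : ∀ i, 0 ≤ f i) (hg : ∀ j, 0 ≤ g j)
    (P Q : ℕ → Prop) [DecidablePred P] [DecidablePred Q]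
    (hPQ : ∀ i, 1 ≤ i → P i ∨ Q (i - 1)) :
    ∑ i ∈ (range N).filter (fun i => i % 2 = 1), min (f i) (g (i - 1))
      ≤ ∑ i ∈ (range N).filter (fun i => i % 2 = 1 ∧ P i), f i
        + ∑ j ∈ (range N).filter (fun j => j % 2 = 0 ∧ Q j), g j := by
  have hmin : ∀ i ∈ (range N).filter (fun i => i % 2 = 1),
      min (f i) (g (i - 1)) ≤ (if P i then f i else 0) + if Q (i - 1) then g (i - 1) else 0 := by
    intro i hi
    have : 1 ≤ i := by simp only [mem_filter] at hi; omega
    rcases hPQ i this with h | h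
    · split_ifs <;> linarith [min_le_left (f i) (g (i - 1)), hg (i - 1)]
    · split_ifs <;> linarith [min_le_right (f i) (g (i - 1)), hf i]
  refine (sum_le_sum hmin).trans ?_
  rw [sum_add_distrib, ← sum_filter, ← sum_filter, filter_filter, filter_filter]
  exact add_le_add_right (sum_filter_odd_le_sum_filter_even hg Q) _

lemma add_le_sum_sum_bool {f : Bool → Bool → ℝ} (hf : ∀ s p, 0 ≤ f s p) (s s' : Bool) :
    f s true + f s' false ≤ ∑ s, ∑ p, f s p := by
  have := hf true true; have := hf true false; have := hf false true; have := hf false false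
  cases s <;> cases s' <;> simp only [Fintype.sum_bool] <;> linarith

theorem Ddist_lower_bound_general {d : ℕ} (N : ℕ) (q : ℕ → ℝ)
    (S : ℕ → Fin d → ℤ) (hS : IsNNPath S)
    (x : Bool → Bool → (Fin d → ℤ))
    (hpar : ∀ s p, (∑ j, x s p j) % 2 = parInt p)
    (s s' : Bool) (hadj : (∑ j, |x s true j - x s' false j|) ≠ 1) :
    ∑ i ∈ (Finset.range N).filter (fun i => i % 2 = 1),
        min (Qpar N q true s * Qsgn s (q i)) (Qpar N q false s' * Qsgn s' (q (i - 1)))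
      ≤ Ddist N q S x := by
  have hterm : ∀ σ p, 0 ≤ Qpar N q p σ * (Qpar N q p σ - sgnVal σ * Qof N q S (x σ p)) :=
    fun σ p => mul_nonneg (Qpar_nonneg N q p σ)
      (sub_nonneg.2 (sgnVal_mul_Qof_le_Qpar N q hS σ (hpar σ p)))
  have hodd := sum_Qsgn_of_ne_le_Qpar_sub N q hS s (hpar s true)
  have heven := sum_Qsgn_of_ne_le_Qpar_sub N q hS s' (hpar s' false)
  simp only [if_true, Bool.false_eq_true, if_false] at hodd heven
  calc _ ≤ ∑ i ∈ (range N).filter (fun i => i % 2 = 1 ∧ S i ≠ x s true),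
            Qpar N q true s * Qsgn s (q i)
        + ∑ j ∈ (range N).filter (fun j => j % 2 = 0 ∧ S j ≠ x s' false),
            Qpar N q false s' * Qsgn s' (q j) :=
        sum_filter_odd_min_le (fun i => mul_nonneg (Qpar_nonneg ..) (Qsgn_nonneg ..))
          (fun j => mul_nonneg (Qpar_nonneg ..) (Qsgn_nonneg ..)) _ _
          fun _ => hS.ne_or_ne_of_not_adj hadj
    _ ≤ Qpar N q true s * (Qpar N q true s - sgnVal s * Qof N q S (x s true))
        + Qpar N q false s' * (Qpar N q false s' - sgnVal s' * Qof N q S (x s' false)) := by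
        rw [← mul_sum, ← mul_sum]
        gcongr <;> exact Qpar_nonneg ..
    _ ≤ Ddist N q S x := add_le_sum_sum_bool hterm s s'

/-- if the optimal odd site for sign `s` and the optimal even
site for sign `s'` are not adjacent, then
`D_N ≥ ∑_{1 ≤ i < N odd} min(Q_s^odd q_i^s, Q_{s'}^even q_{i-1}^{s'})`. -/
theorem Ddist_lower_bound {d : ℕ} (hd : 1 ≤ d) (N : ℕ) (q : ℕ → ℝ)
    (S : ℕ → Fin d → ℤ) (hS : IsNNPath S)
    (x : Bool → Bool → (Fin d → ℤ))
    (hpar : ∀ s p, (∑ j, x s p j) % 2 = parInt p)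
    (hmax : ∀ s p (y : Fin d → ℤ), (∑ j, y j) % 2 = parInt p →
      sgnVal s * Qof N q S y ≤ sgnVal s * Qof N q S (x s p))
    (s s' : Bool) (hadj : (∑ j, |x s true j - x s' false j|) ≠ 1) :
    ∑ i ∈ (Finset.range N).filter (fun i => i % 2 = 1),
        min (Qpar N q true s * Qsgn s (q i)) (Qpar N q false s' * Qsgn s' (q (i - 1)))
      ≤ Ddist N q S x :=
  Ddist_lower_bound_general N q S hS x hpar s s' hadj

end
end

section
/- Suppose the i.i.d. charges $\{q_i\}$ have standard normal distribution, $d\ge1$, and let $Z_N(\beta)$ be the quenched partition function of the charged polymer. Then $\mathbb{E}Z_N(1)=\infty$ for all sufficiently large $N$. (Hence the annealed critical inverse temperature equals $1$.) -/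
open MeasureTheory ProbabilityTheory Filter Finset Real
open scoped ENNReal

noncomputable section

/-- `S` is a simple symmetric random walk on `ℤ^d` started at `0` under `P`:
each sequence of admissible increments has probability `(2d)⁻ⁿ`. -/
def IsSRW {Ω : Type*} [MeasurableSpace Ω] (P : Measure Ω) {d : ℕ}
    (S : ℕ → Ω → Fin d → ℤ) : Prop :=
  (∀ i, Measurable (S i)) ∧ (∀ ω, S 0 ω = 0) ∧
  ∀ (n : ℕ) (v : Fin n → Fin d → ℤ), (∀ i, IsUnitStep (v i)) →
    P {ω | ∀ i : Fin n, S (i + 1) ω - S i ω = v i} = (1 / (2 * d) : ℝ≥0∞) ^ n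

/-- Local time of the walk at site `x` up to time `N - 1`. -/
def locCount {Ω : Type*} {d : ℕ} (S : ℕ → Ω → Fin d → ℤ) (N : ℕ)
    (x : Fin d → ℤ) (ω : Ω) : ℕ :=
  ((Finset.range N).filter (fun i => S i ω = x)).card

/-- Quenched partition function of the charged polymer: the charges live on
`(Ωq, Pq)`, the walk on `(Ωs, Ps)`, and `Z N β ωq = E_S[exp(β H_N / N)]`. -/
def Zq {d : ℕ} {Ωq Ωs : Type*} [MeasurableSpace Ωs] (Ps : Measure Ωs)
    (q : ℕ → Ωq → ℝ) (S : ℕ → Ωs → Fin d → ℤ) (N : ℕ) (β : ℝ) (ωq : Ωq) : ℝ :=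
  ∫ ωs, Real.exp (β * Hof N (fun i => q i ωq) (fun i => S i ωs) / N) ∂Ps

/-! With positive probability the walk oscillates between `0` and a neighbour up to time `N`, so
the charge collected at the origin is a sum of `ν = ⌈N / 2⌉` independent standard Gaussians, that
is an `𝒩(0, ν)` variable `X`. Since `H_N ≥ (Q_N^0)²`, `E Z_N(1)` is at least a positive multiple
of `E exp(X² / N)`, which is infinite because `ν / N ≥ 1 / 2`. -/

open scoped NNReal

lemma lintegral_exp_mul_sq_gaussianReal_eq_top {v : ℝ≥0} (hv : v ≠ 0) {c : ℝ}
    (hc : 1 ≤ 2 * c * v) :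
    ∫⁻ x, ENNReal.ofReal (exp (c * x ^ 2)) ∂gaussianReal 0 v = ∞ := by
  have hv0 : (0 : ℝ) < v := by positivity
  have hdensity : ∀ x : ℝ, ENNReal.ofReal (√(2 * π * v))⁻¹ ≤
      gaussianPDF 0 v x * ENNReal.ofReal (exp (c * x ^ 2)) := by
    intro x
    rw [gaussianPDF, gaussianPDFReal, ← ENNReal.ofReal_mul (by positivity), mul_assoc _ (rexp _),
      ← exp_add]
    refine ENNReal.ofReal_le_ofReal (le_mul_of_one_le_right (by positivity) (one_le_exp ?_))
    rw [sub_zero, neg_div, neg_add_eq_sub, sub_nonneg, div_le_iff₀ (by positivity)]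
    nlinarith [sq_nonneg x]
  rw [gaussianReal_of_var_ne_zero 0 hv,
    lintegral_withDensity_eq_lintegral_mul _ (measurable_gaussianPDF 0 v) (by fun_prop),
    eq_top_iff]
  calc ∞ = ∫⁻ _ : ℝ, ENNReal.ofReal (√(2 * π * v))⁻¹ := by
        rw [lintegral_const, Real.volume_univ, ENNReal.mul_top]
        positivity
    _ ≤ _ := lintegral_mono hdensity

lemma map_sum_eq_gaussianReal {Ω ι : Type*} [MeasurableSpace Ω] {P : Measure Ω}
    [IsProbabilityMeasure P] {X : ι → Ω → ℝ} (hXm : ∀ i, Measurable (X i))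
    (hX : iIndepFun X P) {m : ι → ℝ} {v : ι → ℝ≥0}
    (hlaw : ∀ i, P.map (X i) = gaussianReal (m i) (v i)) (s : Finset ι) :
    P.map (fun ω ↦ ∑ i ∈ s, X i ω) = gaussianReal (∑ i ∈ s, m i) (∑ i ∈ s, v i) := by
  classical
  induction s using Finset.induction_on with
  | empty => simp [Measure.map_const]
  | insert a s ha ih =>
    have hsum : (fun ω ↦ ∑ i ∈ insert a s, X i ω) = (∑ i ∈ s, X i) + X a := by
      ext ω; simp [Finset.sum_insert ha, add_comm]
    rw [hsum, gaussianReal_add_gaussianReal_of_indepFun (hX.indepFun_finsetSum_of_notMem hXm ha)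
      (by simpa only [Finset.sum_fn] using ih) (hlaw a), Finset.sum_insert ha,
      Finset.sum_insert ha, add_comm, add_comm (v a)]

lemma lintegral_exp_sq_sum_div_eq_top {Ω ι : Type*} [MeasurableSpace Ω] {P : Measure Ω}
    [IsProbabilityMeasure P] {X : ι → Ω → ℝ} (hXm : ∀ i, Measurable (X i))
    (hX : iIndepFun X P) (hlaw : ∀ i, P.map (X i) = gaussianReal 0 1) {s : Finset ι} {N : ℕ}
    (hN : 0 < N) (hs : N ≤ 2 * #s) :
    ∫⁻ ω, ENNReal.ofReal (exp ((∑ i ∈ s, X i ω) ^ 2 / N)) ∂P = ∞ := by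
  have hsum : P.map (fun ω ↦ ∑ i ∈ s, X i ω) = gaussianReal 0 #s := by
    simpa using map_sum_eq_gaussianReal hXm hX hlaw s
  have hs0 : 0 < #s := by omega
  rw [← lintegral_map (f := fun x ↦ ENNReal.ofReal (exp (x ^ 2 / N))) (by fun_prop)
    (Finset.measurable_sum _ fun i _ ↦ hXm i), hsum]
  simp_rw [div_eq_inv_mul]
  refine lintegral_exp_mul_sq_gaussianReal_eq_top (by positivity) ?_
  have hN' : (0 : ℝ) < N := by exact_mod_cast hN
  calc (1 : ℝ) = (N : ℝ)⁻¹ * N := (inv_mul_cancel₀ hN'.ne').symm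
    _ ≤ (N : ℝ)⁻¹ * (2 * #s) := by gcongr; exact_mod_cast hs
    _ = _ := by push_cast; ring

section Energy

variable {d N : ℕ} (q : ℕ → ℝ)

lemma hof_eq_sum_sum (S : ℕ → Fin d → ℤ) :
    Hof N q S = ∑ i ∈ range N, ∑ j ∈ range N, if S i = S j then q i * q j else 0 := by
  simp_rw [Hof, Qof, sq, Finset.sum_mul_sum, ite_mul, mul_ite, zero_mul, mul_zero]
  rw [Finset.sum_comm]
  refine Finset.sum_congr rfl fun i hi ↦ ?_
  rw [Finset.sum_comm]
  refine Finset.sum_congr rfl fun j _ ↦ ?_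
  simp only [ite_self]
  rw [Finset.sum_ite_eq, if_pos (mem_image_of_mem S hi)]
  exact if_congr eq_comm rfl rfl

lemma hof_congr {S T : ℕ → Fin d → ℤ} (h : ∀ i < N, S i = T i) : Hof N q S = Hof N q T := by
  simp_rw [hof_eq_sum_sum]
  refine Finset.sum_congr rfl fun i hi ↦ Finset.sum_congr rfl fun j hj ↦ ?_
  rw [h i (mem_range.1 hi), h j (mem_range.1 hj)]

lemma hof_le_sq_sum_abs (S : ℕ → Fin d → ℤ) : Hof N q S ≤ (∑ i ∈ range N, |q i|) ^ 2 := by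
  rw [hof_eq_sum_sum, sq, Finset.sum_mul_sum]
  refine Finset.sum_le_sum fun i _ ↦ Finset.sum_le_sum fun j _ ↦ ?_
  split_ifs
  · rw [← abs_mul]; exact le_abs_self _
  · positivity

lemma sq_qof_le_hof (S : ℕ → Fin d → ℤ) {x : Fin d → ℤ} (hx : x ∈ (range N).image S) :
    Qof N q S x ^ 2 ≤ Hof N q S :=
  Finset.single_le_sum (f := fun y ↦ Qof N q S y ^ 2) (fun _ _ ↦ sq_nonneg _) hx

lemma hof_nonneg (S : ℕ → Fin d → ℤ) : 0 ≤ Hof N q S :=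
  Finset.sum_nonneg fun _ _ ↦ sq_nonneg _

lemma measurable_hof {Ω : Type*} [MeasurableSpace Ω] {S : ℕ → Ω → Fin d → ℤ}
    (hS : ∀ i, Measurable (S i)) : Measurable fun ω ↦ Hof N q (fun i ↦ S i ω) := by
  simp_rw [hof_eq_sum_sum]
  refine Finset.measurable_sum _ fun i _ ↦ Finset.measurable_sum _ fun j _ ↦ ?_
  exact Measurable.ite (measurableSet_eq_fun (hS i) (hS j)) measurable_const measurable_const

end Energy

section PartitionFunction

variable {d N : ℕ} {Ωq Ωs : Type*} [MeasurableSpace Ωs] {Ps : Measure Ωs} {q : ℕ → Ωq → ℝ}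
  {S : ℕ → Ωs → Fin d → ℤ}

lemma abs_mul_hof_div_le (q : ℕ → ℝ) (S : ℕ → Fin d → ℤ) (β : ℝ) :
    |β * Hof N q S / N| ≤ |β| * (∑ i ∈ range N, |q i|) ^ 2 := by
  rcases Nat.eq_zero_or_pos N with rfl | hN
  · simp
  rw [abs_div, abs_mul, abs_of_nonneg (hof_nonneg q S), Nat.abs_cast]
  calc |β| * Hof N q S / N ≤ |β| * Hof N q S :=
        div_le_self (mul_nonneg (abs_nonneg β) (hof_nonneg q S)) (by exact_mod_cast hN)
    _ ≤ |β| * (∑ i ∈ range N, |q i|) ^ 2 := by gcongr; exact hof_le_sq_sum_abs q S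

lemma ofReal_Zq_eq_lintegral [IsFiniteMeasure Ps] (hS : ∀ i, Measurable (S i)) (β : ℝ)
    (ωq : Ωq) :
    ENNReal.ofReal (Zq Ps q S N β ωq) =
      ∫⁻ ωs, ENNReal.ofReal (exp (β * Hof N (q · ωq) (S · ωs) / N)) ∂Ps := by
  have hmeas : Measurable fun ωs ↦ exp (β * Hof N (q · ωq) (S · ωs) / N) :=
    (((measurable_hof _ hS).const_mul β).div_const _).exp
  refine ofReal_integral_eq_lintegral_ofReal ?_ (ae_of_all _ fun _ ↦ (exp_pos _).le)
  refine .of_bound hmeas.aestronglyMeasurable (exp (|β| * (∑ i ∈ range N, |q i ωq|) ^ 2))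
    (ae_of_all _ fun ωs ↦ ?_)
  rw [norm_of_nonneg (exp_pos _).le, exp_le_exp]
  exact (le_abs_self _).trans (abs_mul_hof_div_le _ _ β)

lemma measure_mul_ofReal_exp_le_ofReal_Zq [IsFiniteMeasure Ps] (hS : ∀ i, Measurable (S i))
    {β c : ℝ} {ωq : Ωq} {A : Set Ωs} (hA : ∀ ωs ∈ A, c ≤ β * Hof N (q · ωq) (S · ωs) / N) :
    Ps A * ENNReal.ofReal (exp c) ≤ ENNReal.ofReal (Zq Ps q S N β ωq) := by
  rw [ofReal_Zq_eq_lintegral hS, mul_comm]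
  have hmeas : Measurable fun ωs ↦ ENNReal.ofReal (exp (β * Hof N (q · ωq) (S · ωs) / N)) :=
    (((measurable_hof _ hS).const_mul β).div_const _).exp.ennreal_ofReal
  refine le_trans ?_ (mul_meas_ge_le_lintegral₀ hmeas.aemeasurable (ENNReal.ofReal (exp c)))
  gcongr
  exact fun ωs hωs ↦ ENNReal.ofReal_le_ofReal (exp_le_exp.2 (hA ωs hωs))

end PartitionFunction

section Walk

variable {d : ℕ}

lemma IsUnitStep.neg {v : Fin d → ℤ} (hv : IsUnitStep v) : IsUnitStep (-v) := by
  simpa [IsUnitStep] using hv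

lemma isUnitStep_single (j : Fin d) : IsUnitStep (Pi.single j 1) := by
  simp [IsUnitStep, Pi.single_apply, apply_ite abs]

def oscPath (e : Fin d → ℤ) (k : ℕ) : Fin d → ℤ := if Even k then 0 else e

lemma isUnitStep_oscPath_succ_sub {e : Fin d → ℤ} (he : IsUnitStep e) (k : ℕ) :
    IsUnitStep (oscPath e (k + 1) - oscPath e k) := by
  rcases Nat.even_or_odd k with hk | hk
  · simpa [oscPath, hk, Nat.even_add_one] using he
  · simpa [oscPath, hk, Nat.even_add_one, Nat.not_even_iff_odd.2 hk] using he.neg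

lemma IsSRW.measure_follows_path {Ω : Type*} [MeasurableSpace Ω] {P : Measure Ω}
    {S : ℕ → Ω → Fin d → ℤ} (hS : IsSRW P S) {T : ℕ → Fin d → ℤ} (hT0 : T 0 = 0)
    (hT : ∀ k, IsUnitStep (T (k + 1) - T k)) (n : ℕ) :
    P {ω | ∀ k ≤ n, S k ω = T k} = (1 / (2 * d) : ℝ≥0∞) ^ n := by
  rw [← hS.2.2 n (fun i ↦ T (i + 1) - T i) fun i ↦ hT i]
  congr 1
  ext ω
  refine ⟨fun h i ↦ by rw [h i i.2.le, h (i + 1) i.2], fun h k hk ↦ ?_⟩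
  induction k with
  | zero => rw [hS.2.1 ω, hT0]
  | succ k ih =>
    have := h ⟨k, hk⟩
    rw [← sub_add_cancel (S (k + 1) ω) (S k ω), this, ih (by omega)]
    exact sub_add_cancel _ _

lemma qof_oscPath_zero (q : ℕ → ℝ) {e : Fin d → ℤ} (he : e ≠ 0) (N : ℕ) :
    Qof N q (oscPath e) 0 = ∑ i ∈ (range N).filter Even, q i := by
  rw [Qof, Finset.sum_filter]
  refine Finset.sum_congr rfl fun i _ ↦ ?_
  by_cases hi : Even i <;> simp [oscPath, hi, he]

lemma sq_sum_even_le_hof_oscPath (q : ℕ → ℝ) {e : Fin d → ℤ} (he : e ≠ 0) {N : ℕ}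
    (hN : 0 < N) : (∑ i ∈ (range N).filter Even, q i) ^ 2 ≤ Hof N q (oscPath e) := by
  rw [← qof_oscPath_zero q he]
  exact sq_qof_le_hof q _ (mem_image.2 ⟨0, mem_range.2 hN, by simp [oscPath]⟩)

lemma le_two_mul_card_filter_even_range (N : ℕ) : N ≤ 2 * #((range N).filter Even) := by
  induction N with
  | zero => simp
  | succ n ih =>
    rw [range_add_one, filter_insert]
    split_ifs with hn
    · rw [card_insert_of_notMem (by simp)]
      omega
    · obtain ⟨r, rfl⟩ := Nat.not_even_iff_odd.1 hn
      omega

end Walk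

/-- for i.i.d. standard Gaussian charges, the annealed partition
function at `β = 1` is infinite: `E[Z_N(1)] = ∞` for all sufficiently
large `N`. -/
theorem annealed_Z_infinite_gaussian {d : ℕ} (hd : 1 ≤ d) {Ωq Ωs : Type*}
    [MeasurableSpace Ωq] [MeasurableSpace Ωs]
    (Pq : Measure Ωq) [IsProbabilityMeasure Pq]
    (Ps : Measure Ωs) [IsProbabilityMeasure Ps]
    (q : ℕ → Ωq → ℝ) (hqm : ∀ i, Measurable (q i))
    (hindep : iIndepFun q Pq)
    (hgauss : ∀ i, Measure.map (q i) Pq = gaussianReal 0 1)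
    (S : ℕ → Ωs → Fin d → ℤ) (hS : IsSRW Ps S) :
    ∃ N₀ : ℕ, ∀ N ≥ N₀, ∫⁻ ωq, ENNReal.ofReal (Zq Ps q S N 1 ωq) ∂Pq = ∞ := by
  refine ⟨1, fun N hN ↦ ?_⟩
  set e : Fin d → ℤ := Pi.single ⟨0, hd⟩ 1
  have he : e ≠ 0 := fun h ↦ by simpa [e] using congrFun h ⟨0, hd⟩
  set A := {ωs | ∀ k ≤ N - 1, S k ωs = oscPath e k}
  have hA : Ps A ≠ 0 := by
    rw [hS.measure_follows_path (by simp [oscPath])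
      (isUnitStep_oscPath_succ_sub (isUnitStep_single _))]
    simp [ENNReal.mul_eq_top]
  have hZ (ωq : Ωq) : Ps A * ENNReal.ofReal (exp ((∑ i ∈ (range N).filter Even, q i ωq) ^ 2 / N))
      ≤ ENNReal.ofReal (Zq Ps q S N 1 ωq) := by
    refine measure_mul_ofReal_exp_le_ofReal_Zq hS.1 fun ωs hωs ↦ ?_
    rw [one_mul, hof_congr _ fun i hi ↦ hωs i (by omega)]
    gcongr
    exact sq_sum_even_le_hof_oscPath _ he hN
  rw [eq_top_iff, ← ENNReal.mul_top hA, ← lintegral_exp_sq_sum_div_eq_top hqm hindep hgauss hN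
    (le_two_mul_card_filter_even_range N), ← lintegral_const_mul' _ _ (measure_ne_top Ps A)]
  exact lintegral_mono hZ
end
end
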